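/- For 0 ≤ r₁ ≤ r₂ ≤ m, the minimum distance of BiD(m,r₁,r₂) is at least max{ 4^{r₁}·3^{m−r₁−r₂}, 3^{m−r₂}·2^{r₁+r₂−m} } (rounded up to the nearest integer). -/

import Mathlib

open Finset

abbrev F2 := ZMod 2
abbrev F4 := GaloisField 2 2

def A3 : Matrix (ZMod 3) (ZMod 3) F2 := !![1,1,1; 1,1,0; 1,0,1]

/-- The `m`-fold Kronecker power of `A3`, with rows and columns indexed by `Fin m → ZMod 3`. -/
def A3pow (m : ℕ) : Matrix (Fin m → ZMod 3) (Fin m → ZMod 3) F2 :=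
  fun r c => ∏ i, A3 (r i) (c i)

/-- The DFT coefficient at frequency `j` as an `F2`-linear functional. -/
noncomputable def dftL (m : ℕ) (α : F4) (j : Fin m → ZMod 3) :
    ((Fin m → ZMod 3) → F2) →ₗ[F2] F4 :=
  ∑ i : Fin m → ZMod 3,
    α ^ (∑ l, i l * j l).val • ((Algebra.linearMap F2 F4).comp (LinearMap.proj i))

/-- The abelian code with frequency weight set `W`. -/
noncomputable def abelianCode (m : ℕ) (α : F4) (W : Finset ℕ) :
    Submodule F2 ((Fin m → ZMod 3) → F2) :=
  ⨅ j ∈ {j : Fin m → ZMod 3 | hammingNorm j ∉ W}, LinearMap.ker (dftL m α j)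

/-- The BiD code as the span of the rows of `A3pow m` with weight in the prescribed range. -/
noncomputable def BiD (m r₁ r₂ : ℕ) : Submodule F2 ((Fin m → ZMod 3) → F2) :=
  Submodule.span F2 {a | ∃ r, (2^r₂ * 3^(m-r₂) ≤ hammingNorm (A3pow m r) ∧
    hammingNorm (A3pow m r) ≤ 2^r₁ * 3^(m-r₁)) ∧ a = A3pow m r}

/-- Minimum distance of a linear code. -/
noncomputable def minDist {m : ℕ} (C : Submodule F2 ((Fin m → ZMod 3) → F2)) : ℕ :=
  sInf {d : ℕ | ∃ a ∈ C, a ≠ 0 ∧ hammingNorm a = d}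

/-!
Splitting the index of a word by its first coordinate cuts it into three blocks. Since
`A3pow (m+1) = A3 ⊗ A3pow m`, a word in the span of the rows whose index has weight in
`[r₁, r₂]` has blocks `(u + v + w | u + v | u + w)`, with `u` in the corresponding span for
`(m, r₁, r₂)` and `v, w` in the one for `(m, r₁ - 1, r₂ - 1)`. The blocks pairwise differ by
`v`, `w`, `v + w` and add up to `u`; according to which blocks vanish or coincide, this bounds the
weight below by bounds for length `3^m` (the case of a single nonzero block uses that the rows
are linearly independent, so two such spans meet in the span for the intersected weight range).
The closed form `max (4^r₁ 3^(m-r₁-r₂)) (3^(m-r₂) 2^(r₁+r₂-m))` satisfies every one of the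
resulting recursive inequalities. Finally `BiD m r₁ r₂` lies in the span for `[r₁, r₂]`, as the
row of index `r` has weight `2^wt(r) 3^(m-wt(r))`.
-/

section Hamming

variable {β : Type*} [DecidableEq β]

theorem hammingNorm_cons [Zero β] {n : ℕ} (a : β) (x : Fin n → β) :
    hammingNorm (Fin.cons a x : Fin (n + 1) → β) = hammingNorm x + if a = 0 then 0 else 1 := by
  simp only [hammingNorm, Finset.card_filter, Fin.sum_univ_succ, Fin.cons_zero, Fin.cons_succ]
  split_ifs <;> simp_all [add_comm]

theorem hammingNorm_eq_sum_cons [Zero β] {κ : Type*} [Fintype κ] {m : ℕ}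
    (c : (Fin (m + 1) → κ) → β) : hammingNorm c = ∑ s, hammingNorm fun x => c (Fin.cons s x) := by
  simp only [hammingNorm, Finset.card_filter]
  rw [← (Fin.consEquiv fun _ => κ).sum_comp, Fintype.sum_prod_type]
  rfl

theorem hammingNorm_add_le [AddZeroClass β] {ι : Type*} [Fintype ι] (x y : ι → β) :
    hammingNorm (x + y) ≤ hammingNorm x + hammingNorm y := by
  classical
  refine (Finset.card_le_card fun i hi => ?_).trans (Finset.card_union_le _ _)
  simp only [Finset.mem_filter, Finset.mem_union, Finset.mem_univ, true_and, Pi.add_apply] at hi ⊢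
  by_contra! h
  simp [h.1, h.2] at hi

theorem exists_hammingNorm_eq [Zero β] [Nontrivial β] {ι : Type*} [Fintype ι] {k : ℕ}
    (hk : k ≤ Fintype.card ι) : ∃ r : ι → β, hammingNorm r = k := by
  classical
  obtain ⟨b, hb⟩ := exists_ne (0 : β)
  obtain ⟨s, -, rfl⟩ := Finset.exists_subset_card_eq (s := Finset.univ) hk
  refine ⟨fun i => if i ∈ s then b else 0, ?_⟩
  simp [hammingNorm, hb]

end Hamming

namespace Matrix

variable {κ R : Type*} [CommSemiring R]

def piKron (M : Matrix κ κ R) (ι : Type*) [Fintype ι] : Matrix (ι → κ) (ι → κ) R :=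
  fun r c => ∏ i, M (r i) (c i)

theorem piKron_mul [Fintype κ] {ι : Type*} [Fintype ι] [DecidableEq ι] (M N : Matrix κ κ R) :
    piKron M ι * piKron N ι = piKron (M * N) ι := by
  ext r c
  simp only [mul_apply, piKron, ← Finset.prod_mul_distrib]
  rw [← Fintype.prod_sum (fun i s => M (r i) s * N s (c i))]

theorem piKron_one {ι : Type*} [Fintype ι] [DecidableEq ι] [DecidableEq κ] :
    piKron (1 : Matrix κ κ R) ι = 1 := by
  ext r c
  simp only [piKron, one_apply, Finset.prod_boole, funext_iff, Finset.mem_univ, true_implies]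

theorem hammingNorm_piKron [Fintype κ] [NoZeroDivisors R] [Nontrivial R] [DecidableEq R]
    {ι : Type*} [Fintype ι] [DecidableEq ι] (M : Matrix κ κ R) (r : ι → κ) :
    hammingNorm (M.piKron ι r) = ∏ i, hammingNorm (M (r i)) := by
  simp only [hammingNorm, ← Fintype.card_piFinset]
  congr 1
  ext c
  simp [piKron, Finset.prod_ne_zero_iff]

variable [Fintype κ]

def kronCons (M : Matrix κ κ R) (m : ℕ) :
    (κ → (Fin m → κ) → R) →ₗ[R] ((Fin (m + 1) → κ) → R) where
  toFun g x := ∑ t, M t (x 0) * g t (Fin.tail x)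
  map_add' g h := by ext x; simp [mul_add, Finset.sum_add_distrib]
  map_smul' a g := by ext x; simp [Finset.mul_sum, mul_left_comm]

theorem kronCons_apply_cons (M : Matrix κ κ R) {m : ℕ} (g : κ → (Fin m → κ) → R)
    (s : κ) (x : Fin m → κ) : M.kronCons m g (Fin.cons s x) = (∑ t, M t s • g t) x := by
  simp [kronCons, Finset.sum_apply]

theorem piKron_cons [DecidableEq κ] (M : Matrix κ κ R) {m : ℕ} (t : κ) (r : Fin m → κ) :
    M.piKron (Fin (m + 1)) (Fin.cons t r) = M.kronCons m (Pi.single t (M.piKron (Fin m) r)) := by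
  ext x
  rw [← Fin.cons_self_tail x, kronCons_apply_cons,
    Fintype.sum_eq_single t fun c hc => by simp [Pi.single_eq_of_ne hc]]
  simp [piKron, Fin.prod_univ_succ, Fin.tail]

theorem hammingNorm_kronCons [DecidableEq R] (M : Matrix κ κ R) {m : ℕ}
    (g : κ → (Fin m → κ) → R) :
    hammingNorm (M.kronCons m g) = ∑ s, hammingNorm (∑ t, M t s • g t) := by
  simp only [hammingNorm_eq_sum_cons, kronCons_apply_cons]

end Matrix

theorem ZModModule.add_ne_zero_of_ne {M : Type*} [AddCommGroup M] [Module (ZMod 2) M] {a b : M}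
    (h : a ≠ b) : a + b ≠ 0 := by
  rwa [ne_eq, add_eq_zero_iff_eq_neg, ZModModule.neg_eq_self]

theorem ZModModule.blocks_add {M : Type*} [AddCommGroup M] [Module (ZMod 2) M] (u v w : M) :
    (u + v + w) + (u + v) = w ∧ (u + v + w) + (u + w) = v ∧ (u + v) + (u + w) = v + w ∧
      (u + v + w) + (u + v) + (u + w) = u := by
  have cancel (a b : M) : a + (a + b) = b := by rw [← add_assoc, ZModModule.add_self, zero_add]
  refine ⟨?_, ?_, ?_, ?_⟩ <;> simp [add_left_comm, add_comm, cancel, ZModModule.add_self]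

theorem LinearIndependent.span_image_inf_span_image {ι R M : Type*} [Ring R] [AddCommGroup M]
    [Module R M] {v : ι → M} (hv : LinearIndependent R v) (s t : Set ι) :
    Submodule.span R (v '' s) ⊓ Submodule.span R (v '' t) = Submodule.span R (v '' (s ∩ t)) := by
  refine le_antisymm ?_ (le_inf (Submodule.span_mono (Set.image_mono Set.inter_subset_left))
    (Submodule.span_mono (Set.image_mono Set.inter_subset_right)))
  rintro x ⟨hs, ht⟩
  simp only [SetLike.mem_coe, Finsupp.mem_span_image_iff_linearCombination] at hs ht ⊢
  obtain ⟨l, hl, rfl⟩ := hs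
  obtain ⟨l', hl', hll'⟩ := ht
  rw [hv.finsuppLinearCombination_injective hll'] at hl'
  exact ⟨l, by rw [Finsupp.supported_inter]; exact ⟨hl, hl'⟩, rfl⟩

section A3

open Matrix

theorem A3pow_eq_piKron (m : ℕ) : A3pow m = A3.piKron (Fin m) := rfl

theorem linearIndependent_A3pow (m : ℕ) : LinearIndependent F2 (A3pow m) := by
  have hA3 : A3 * (A3 * A3 * A3) = 1 := by decide
  have h : A3pow m * (A3 * A3 * A3).piKron (Fin m) = 1 := by
    rw [A3pow_eq_piKron, piKron_mul, hA3, piKron_one]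
  exact linearIndependent_rows_iff_isUnit.2
    ((isUnit_iff_isUnit_det (A3pow m)).2 (isUnit_det_of_right_inverse h))

theorem hammingNorm_A3pow {m : ℕ} (r : Fin m → ZMod 3) :
    hammingNorm (A3pow m r) = 2 ^ hammingNorm r * 3 ^ (m - hammingNorm r) := by
  have hrow : ∀ t, hammingNorm (A3 t) = if t ≠ 0 then 2 else 3 := by decide
  have hzeros : (Finset.univ.filter fun i => ¬ r i ≠ 0).card = m - hammingNorm r := by
    rw [Finset.filter_not, Finset.card_sdiff_of_subset (Finset.filter_subset _ _)]
    simp [hammingNorm]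
  rw [A3pow_eq_piKron, hammingNorm_piKron]
  simp only [hrow, Finset.prod_ite, Finset.prod_const, hzeros]
  rfl

theorem ZMod.sum_univ_three {M : Type*} [AddCommMonoid M] (f : ZMod 3 → M) :
    ∑ s, f s = f 0 + f 1 + f 2 :=
  Fin.sum_univ_three f

theorem hammingNorm_kronCons_A3 {m : ℕ} (g : ZMod 3 → (Fin m → ZMod 3) → F2) :
    hammingNorm (A3.kronCons m g) =
      hammingNorm (g 0 + g 1 + g 2) + hammingNorm (g 0 + g 1) + hammingNorm (g 0 + g 2) := by
  have h : A3 0 0 = 1 ∧ A3 1 0 = 1 ∧ A3 2 0 = 1 ∧ A3 0 1 = 1 ∧ A3 1 1 = 1 ∧ A3 2 1 = 0 ∧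
      A3 0 2 = 1 ∧ A3 1 2 = 0 ∧ A3 2 2 = 1 := by decide
  rw [hammingNorm_kronCons, ZMod.sum_univ_three]
  simp [ZMod.sum_univ_three, h]

end A3

noncomputable def weightSpan (m : ℕ) (S : Set ℕ) : Submodule F2 ((Fin m → ZMod 3) → F2) :=
  Submodule.span F2 (A3pow m '' {r | hammingNorm r ∈ S})

theorem weightSpan_mono {m : ℕ} {S T : Set ℕ} (h : S ⊆ T) : weightSpan m S ≤ weightSpan m T :=
  Submodule.span_mono (Set.image_mono fun _ hr => h hr)

theorem weightSpan_inf (m : ℕ) (S T : Set ℕ) :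
    weightSpan m S ⊓ weightSpan m T = weightSpan m (S ∩ T) :=
  (linearIndependent_A3pow m).span_image_inf_span_image _ _

theorem weightSpan_empty (m : ℕ) : weightSpan m ∅ = ⊥ :=
  Submodule.span_eq_bot.2 fun _ ⟨_, hr, _⟩ => absurd hr (Set.notMem_empty _)

theorem weightSpan_succ_le (m : ℕ) (S : Set ℕ) :
    weightSpan (m + 1) S ≤ (Submodule.pi Set.univ fun t =>
      weightSpan m (if t = 0 then S else (· + 1) ⁻¹' S)).map (A3.kronCons m) := by
  rw [weightSpan, Submodule.span_le]
  rintro _ ⟨r, hr, rfl⟩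
  obtain ⟨t, r, rfl⟩ : ∃ t r', Fin.cons t r' = r := ⟨r 0, Fin.tail r, Fin.cons_self_tail r⟩
  refine ⟨Pi.single t (A3pow m r), ?_, (A3.piKron_cons t r).symm⟩
  rw [SetLike.mem_coe, Submodule.mem_pi]
  intro t' _
  by_cases ht : t' = t
  · subst ht
    rw [Pi.single_eq_same]
    refine Submodule.subset_span ⟨r, ?_, rfl⟩
    split_ifs with ht <;> simpa [hammingNorm_cons, ht] using hr
  · simp [Pi.single_eq_of_ne ht]

noncomputable def minDistBound (m r₁ r₂ : ℤ) : ℝ :=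
  max ((4 : ℝ) ^ r₁ * (3 : ℝ) ^ (m - r₁ - r₂)) ((3 : ℝ) ^ (m - r₂) * (2 : ℝ) ^ (r₁ + r₂ - m))

namespace minDistBound

theorem shift (m r₁ r₂ i j k : ℤ) : minDistBound (m + i) (r₁ + j) (r₂ + k) =
    max ((4 : ℝ) ^ j * 3 ^ (i - j - k) * (4 ^ r₁ * 3 ^ (m - r₁ - r₂)))
      ((3 : ℝ) ^ (i - k) * 2 ^ (j + k - i) * (3 ^ (m - r₂) * 2 ^ (r₁ + r₂ - m))) := by
  rw [minDistBound, show m + i - (r₁ + j) - (r₂ + k) = (m - r₁ - r₂) + (i - j - k) by ring,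
    show m + i - (r₂ + k) = (m - r₂) + (i - k) by ring,
    show r₁ + j + (r₂ + k) - (m + i) = (r₁ + r₂ - m) + (j + k - i) by ring]
  simp only [zpow_add₀ (three_ne_zero (α := ℝ)), zpow_add₀ (two_ne_zero (α := ℝ)),
    zpow_add₀ (four_ne_zero (α := ℝ))]
  ring_nf

theorem succ_succ (m r₁ r₂ : ℤ) : minDistBound (m + 1) r₁ (r₂ + 1) = minDistBound m r₁ r₂ := by
  simpa [minDistBound] using shift m r₁ r₂ 1 0 1

theorem succ_le_three_mul (m r₁ r₂ : ℤ) :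
    minDistBound (m + 1) r₁ r₂ ≤ 3 * minDistBound m r₁ r₂ := by
  have h := shift m r₁ r₂ 1 0 0
  norm_num at h
  rw [h, minDistBound]
  generalize (4 : ℝ) ^ r₁ * 3 ^ (m - r₁ - r₂) = p
  generalize hq : (3 : ℝ) ^ (m - r₂) * 2 ^ (r₁ + r₂ - m) = q
  have : 0 ≤ q := hq ▸ by positivity
  exact max_le (by linarith [le_max_left p q]) (by linarith [le_max_right p q])

theorem le_two_mul_sub_one_left (m r₁ r₂ : ℤ) :
    minDistBound m r₁ r₂ ≤ 2 * minDistBound m (r₁ - 1) r₂ := by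
  have h := shift m r₁ r₂ 0 (-1) 0
  norm_num [← sub_eq_add_neg] at h
  rw [h, minDistBound]
  generalize hp : (4 : ℝ) ^ r₁ * 3 ^ (m - r₁ - r₂) = p
  generalize (3 : ℝ) ^ (m - r₂) * 2 ^ (r₁ + r₂ - m) = q
  have : 0 ≤ p := hp ▸ by positivity
  exact max_le (by linarith [le_max_left (3 / 4 * p) (1 / 2 * q)])
    (by linarith [le_max_right (3 / 4 * p) (1 / 2 * q)])

theorem le_max_sub_one_left (m r₁ r₂ : ℤ) :
    minDistBound m r₁ r₂ ≤ max (3 * minDistBound m (r₁ - 1) (r₂ + 1))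
      (minDistBound m (r₁ - 1) (r₂ + 1) + minDistBound m (r₁ - 1) r₂) := by
  have hA := shift m r₁ r₂ 0 (-1) 1
  have hB := shift m r₁ r₂ 0 (-1) 0
  norm_num [← sub_eq_add_neg] at hA hB
  rw [hA, hB, minDistBound]
  generalize (4 : ℝ) ^ r₁ * 3 ^ (m - r₁ - r₂) = p
  generalize (3 : ℝ) ^ (m - r₂) * 2 ^ (r₁ + r₂ - m) = q
  refine max_le (le_max_of_le_right ?_) (le_max_of_le_left ?_)
  · linarith [le_max_left (1 / 4 * p) (1 / 3 * q), le_max_left (3 / 4 * p) (1 / 2 * q)]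
  · linarith [le_max_right (1 / 4 * p) (1 / 3 * q)]

theorem mono_left (m r₂ : ℤ) : Monotone fun r₁ => minDistBound m r₁ r₂ := by
  intro a a' h
  have hP : ∀ a, (4 : ℝ) ^ a * (3 : ℝ) ^ (m - a - r₂) = (4 / 3 : ℝ) ^ a * 3 ^ (m - r₂) := by
    intro a
    rw [div_zpow, sub_sub, add_comm, ← sub_sub, zpow_sub₀ (by norm_num)]
    ring
  simp only [minDistBound, hP]
  exact max_le_max
    (mul_le_mul_of_nonneg_right (zpow_le_zpow_right₀ (by norm_num) h) (by positivity))
    (mul_le_mul_of_nonneg_left (zpow_le_zpow_right₀ (by norm_num) (by omega)) (by positivity))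

theorem zero_zero_le_one (r₂ : ℕ) : minDistBound 0 0 r₂ ≤ 1 := by
  simp only [minDistBound]
  norm_num
  exact ⟨inv_le_one_of_one_le₀ (one_le_pow₀ (by norm_num)),
    (inv_mul_le_one₀ (by positivity)).2 (pow_le_pow_left₀ (by norm_num) (by norm_num) r₂)⟩

end minDistBound

section WeightBound

variable {ι : Type*} [Fintype ι]

def WeightBound (K : Submodule F2 (ι → F2)) (D : ℝ) : Prop :=
  ∀ a ∈ K, a ≠ 0 → D ≤ hammingNorm a

theorem WeightBound.mono {K K' : Submodule F2 (ι → F2)} {D : ℝ} (h : WeightBound K' D)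
    (hK : K ≤ K') : WeightBound K D :=
  fun a ha => h a (hK ha)

theorem le_hammingNorm_add_add_of_blocks {KA KB KC : Submodule F2 (ι → F2)} {A B C T : ℝ}
    (hA : WeightBound KA A) (hB : WeightBound KB B) (hC : WeightBound KC C)
    (hBC : WeightBound (KB ⊓ KC) T)
    (hTA : T ≤ max (3 * A) (A + B)) (hTB : T ≤ 2 * B) (hTC : T ≤ 3 * C)
    {x y z : ι → F2} (hx : x ∈ KA) (hy : y ∈ KA) (hz : z ∈ KA)
    (hxy : x + y ∈ KB) (hxz : x + z ∈ KB) (hyz : y + z ∈ KB) (hxyz : x + y + z ∈ KC)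
    (hne : x ≠ 0 ∨ y ≠ 0 ∨ z ≠ 0) :
    T ≤ hammingNorm x + hammingNorm y + hammingNorm z := by
  have pair : ∀ a b : ι → F2, a + b ∈ KB → a ≠ b → B ≤ hammingNorm a + hammingNorm b :=
    fun a b hab h => (hB _ hab (ZModModule.add_ne_zero_of_ne h)).trans
      (mod_cast hammingNorm_add_le a b)
  by_cases hall : x = y ∧ x = z
  · obtain ⟨rfl, rfl⟩ := hall
    rw [ZModModule.add_self, zero_add] at hxyz
    have := hC x hxyz (by tauto)
    linarith
  -- A zero block puts each other block in `KB` (`a = a + 0`), and the sum of all three in `KC`.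
  rcases eq_or_ne x 0 with rfl | hx0 <;> rcases eq_or_ne y 0 with rfl | hy0 <;>
    rcases eq_or_ne z 0 with rfl | hz0 <;>
    try simp only [zero_add, add_zero, hammingNorm_zero, Nat.cast_zero] at hxy hxz hyz hxyz ⊢
  · tauto
  · linarith [hBC z ⟨hxz, hxyz⟩ hz0]
  · linarith [hBC y ⟨hxy, hxyz⟩ hy0]
  · linarith [hB y hxy hy0, hB z hxz hz0]
  · linarith [hBC x ⟨hxy, hxyz⟩ hx0]
  · linarith [hB x hxy hx0, hB z hyz hz0]
  · linarith [hB x hxz hx0, hB y hyz hy0]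
  · have := hA x hx hx0
    have := hA y hy hy0
    have := hA z hz hz0
    refine hTA.trans (max_le (by linarith) ?_)
    rcases not_and_or.1 hall with h | h
    · linarith [pair x y hxy h]
    · linarith [pair x z hxz h]

end WeightBound

theorem le_hammingNorm_kronCons_A3 {m : ℕ} {KB KC : Submodule F2 ((Fin m → ZMod 3) → F2)}
    {A B C T : ℝ} (hA : WeightBound (KB ⊔ KC) A) (hB : WeightBound KB B) (hC : WeightBound KC C)
    (hBC : WeightBound (KB ⊓ KC) T)
    (hTA : T ≤ max (3 * A) (A + B)) (hTB : T ≤ 2 * B) (hTC : T ≤ 3 * C)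
    {g : ZMod 3 → (Fin m → ZMod 3) → F2} (hg0 : g 0 ∈ KC) (hg1 : g 1 ∈ KB) (hg2 : g 2 ∈ KB)
    (hc : A3.kronCons m g ≠ 0) : T ≤ hammingNorm (A3.kronCons m g) := by
  have hne : g 0 + g 1 + g 2 ≠ 0 ∨ g 0 + g 1 ≠ 0 ∨ g 0 + g 2 ≠ 0 := by
    contrapose! hc
    rw [← hammingNorm_eq_zero, hammingNorm_kronCons_A3, hc.1, hc.2.1, hc.2.2]
    simp
  have h0 : g 0 ∈ KB ⊔ KC := Submodule.mem_sup_right hg0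
  have h1 : g 1 ∈ KB ⊔ KC := Submodule.mem_sup_left hg1
  have h2 : g 2 ∈ KB ⊔ KC := Submodule.mem_sup_left hg2
  obtain ⟨e2, e1, e12, e0⟩ := ZModModule.blocks_add (g 0) (g 1) (g 2)
  rw [hammingNorm_kronCons_A3]
  push_cast
  refine le_hammingNorm_add_add_of_blocks hA hB hC hBC hTA hTB hTC
    (add_mem (add_mem h0 h1) h2) (add_mem h0 h1) (add_mem h0 h2) ?_ ?_ ?_ ?_ hne
  · rwa [e2]
  · rwa [e1]
  · rw [e12]; exact add_mem hg1 hg2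
  · rwa [e0]

theorem weightBound_weightSpan_zero (r₁ r₂ : ℕ) :
    WeightBound (weightSpan 0 (Set.Icc r₁ r₂)) (minDistBound 0 r₁ r₂) := by
  intro c hc hc0
  obtain rfl : r₁ = 0 := by
    by_contra h
    refine hc0 ((Submodule.eq_bot_iff _).1 (Submodule.span_eq_bot.2 ?_) c hc)
    rintro _ ⟨r, hr, -⟩
    have := hr.1.trans hammingNorm_le_card_fintype
    simp_all
  have := minDistBound.zero_zero_le_one r₂
  have : (1 : ℝ) ≤ hammingNorm c := mod_cast hammingNorm_pos_iff.2 hc0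
  push_cast
  linarith

theorem weightBound_weightSpan_succ_zero {m r₁ : ℕ}
    (ih : WeightBound (weightSpan m (Set.Icc r₁ 0)) (minDistBound m r₁ 0)) :
    WeightBound (weightSpan (m + 1) (Set.Icc r₁ 0)) (minDistBound (m + 1) r₁ 0) := by
  intro c hc hc0
  obtain ⟨g, hg, rfl⟩ := weightSpan_succ_le m _ hc
  have hempty : (· + 1) ⁻¹' Set.Icc r₁ 0 = ∅ := by ext; simp
  have hg1 : g 1 ∈ weightSpan m ∅ := hempty ▸ hg 1 trivial
  have hg2 : g 2 ∈ weightSpan m ∅ := hempty ▸ hg 2 trivial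
  rw [weightSpan_empty, Submodule.mem_bot] at hg1 hg2
  have hwt := hammingNorm_kronCons_A3 g
  simp only [hg1, hg2, add_zero] at hwt
  have hg0_ne : g 0 ≠ 0 := by
    rintro h
    rw [h, hammingNorm_zero, hammingNorm_eq_zero] at hwt
    exact hc0 hwt
  have hT := minDistBound.succ_le_three_mul m r₁ 0
  have hC := ih _ (hg 0 trivial) hg0_ne
  rw [hwt]
  push_cast at hT hC ⊢
  linarith

theorem weightBound_weightSpan_succ_succ {m : ℕ}
    (ih : ∀ r₁ r₂ : ℕ, WeightBound (weightSpan m (Set.Icc r₁ r₂)) (minDistBound m r₁ r₂))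
    (r₁ s : ℕ) :
    WeightBound (weightSpan (m + 1) (Set.Icc r₁ (s + 1))) (minDistBound (m + 1) r₁ (s + 1)) := by
  intro c hc hc0
  obtain ⟨g, hg, rfl⟩ := weightSpan_succ_le m _ hc
  have hshift : (· + 1) ⁻¹' Set.Icc r₁ (s + 1) = Set.Icc (r₁ - 1) s := by ext; simp
  have hg1 : g 1 ∈ weightSpan m (Set.Icc (r₁ - 1) s) := hshift ▸ hg 1 trivial
  have hg2 : g 2 ∈ weightSpan m (Set.Icc (r₁ - 1) s) := hshift ▸ hg 2 trivial
  have hsub : ∀ b : ℤ, minDistBound m (r₁ - 1) b ≤ minDistBound m ↑(r₁ - 1) b :=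
    fun b => minDistBound.mono_left m b (by omega)
  refine le_hammingNorm_kronCons_A3 ((ih (r₁ - 1) (s + 1)).mono (sup_le (weightSpan_mono ?_)
    (weightSpan_mono ?_))) (ih _ _) (ih _ _) ?_ ?_ ?_ ?_ (hg 0 trivial) hg1 hg2 hc0
  · exact Set.Icc_subset_Icc le_rfl (Nat.le_succ s)
  · exact Set.Icc_subset_Icc (Nat.sub_le r₁ 1) le_rfl
  · rw [weightSpan_inf, show Set.Icc (r₁ - 1) s ∩ Set.Icc r₁ (s + 1) = Set.Icc r₁ s by
      ext; simp; omega, minDistBound.succ_succ]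
    exact ih r₁ s
  · rw [minDistBound.succ_succ]
    push_cast
    exact (minDistBound.le_max_sub_one_left m r₁ s).trans
      (max_le_max (by linarith [hsub (s + 1)]) (add_le_add (hsub _) (hsub _)))
  · rw [minDistBound.succ_succ]
    exact (minDistBound.le_two_mul_sub_one_left m r₁ s).trans (by linarith [hsub s])
  · exact minDistBound.succ_le_three_mul _ _ _

theorem weightBound_weightSpan (m r₁ r₂ : ℕ) :
    WeightBound (weightSpan m (Set.Icc r₁ r₂)) (minDistBound m r₁ r₂) := by
  induction m generalizing r₁ r₂ with
  | zero => exact weightBound_weightSpan_zero r₁ r₂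
  | succ m ih =>
    cases r₂ with
    | zero => exact weightBound_weightSpan_succ_zero (ih r₁ 0)
    | succ s => exact weightBound_weightSpan_succ_succ ih r₁ s

theorem strictAntiOn_two_pow_mul_three_pow_sub (m : ℕ) :
    StrictAntiOn (fun k => 2 ^ k * 3 ^ (m - k)) (Set.Iic m) := by
  intro a _ b hb hab
  obtain ⟨d, rfl⟩ := Nat.exists_eq_add_of_lt hab
  have hb : m - a = (m - (a + d + 1)) + (d + 1) := by simp at hb; omega
  have h23 : 2 ^ (d + 1) < 3 ^ (d + 1) := Nat.pow_lt_pow_left (by norm_num) (by omega)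
  calc 2 ^ (a + d + 1) * 3 ^ (m - (a + d + 1)) = 2 ^ a * 3 ^ (m - (a + d + 1)) * 2 ^ (d + 1) := by
        ring
    _ < 2 ^ a * 3 ^ (m - (a + d + 1)) * 3 ^ (d + 1) := by gcongr
    _ = 2 ^ a * 3 ^ (m - a) := by rw [hb]; ring

theorem BiD_le_weightSpan {m r₁ r₂ : ℕ} (h₁ : r₁ ≤ r₂) (h₂ : r₂ ≤ m) :
    BiD m r₁ r₂ ≤ weightSpan m (Set.Icc r₁ r₂) := by
  have hf := strictAntiOn_two_pow_mul_three_pow_sub m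
  have hw : ∀ r : Fin m → ZMod 3, hammingNorm r ∈ Set.Iic m := fun r =>
    (hammingNorm_le_card_fintype).trans_eq (Fintype.card_fin m)
  refine Submodule.span_mono ?_
  rintro _ ⟨r, ⟨hlo, hhi⟩, rfl⟩
  rw [hammingNorm_A3pow] at hlo hhi
  exact ⟨r, ⟨(hf.le_iff_ge (hw r) (h₁.trans h₂)).1 hhi, (hf.le_iff_ge h₂ (hw r)).1 hlo⟩, rfl⟩

theorem WeightBound.le_minDist {m : ℕ} {C : Submodule F2 ((Fin m → ZMod 3) → F2)} {D : ℝ}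
    (h : WeightBound C D) (hC : ∃ a ∈ C, a ≠ 0) : D ≤ minDist C := by
  obtain ⟨a, ha, ha0⟩ := hC
  obtain ⟨c, hc, hc0, hcd⟩ :=
    Nat.sInf_mem (s := {d | ∃ a ∈ C, a ≠ 0 ∧ hammingNorm a = d}) ⟨_, a, ha, ha0, rfl⟩
  rw [minDist, ← hcd]
  exact h c hc hc0

theorem exists_mem_BiD_ne_zero {m r₁ r₂ : ℕ} (h₁ : r₁ ≤ r₂) (h₂ : r₂ ≤ m) :
    ∃ a ∈ BiD m r₁ r₂, a ≠ 0 := by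
  obtain ⟨r, hr⟩ : ∃ r : Fin m → ZMod 3, hammingNorm r = r₁ :=
    exists_hammingNorm_eq (by simpa using h₁.trans h₂)
  refine ⟨A3pow m r, Submodule.subset_span ⟨r, ⟨?_, ?_⟩, rfl⟩, ?_⟩
  · rw [hammingNorm_A3pow, hr]
    exact (strictAntiOn_two_pow_mul_three_pow_sub m).antitoneOn (h₁.trans h₂) h₂ h₁
  · rw [hammingNorm_A3pow, hr]
  · rw [← hammingNorm_pos_iff, hammingNorm_A3pow]
    positivity

/-- Closed-form lower bound on the minimum distance of `BiD(m,r₁,r₂)`: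
`d_min ≥ ⌈max (4^r₁ · 3^(m-r₁-r₂), 3^(m-r₂) · 2^(r₁+r₂-m))⌉` (exponents in `ℤ`). -/
theorem BiD_minDist_lower_bound (m r₁ r₂ : ℕ) (h1 : r₁ ≤ r₂) (h2 : r₂ ≤ m) :
    ⌈max ((4:ℝ)^(r₁:ℤ) * (3:ℝ)^((m:ℤ) - r₁ - r₂))
        ((3:ℝ)^((m:ℤ) - r₂) * (2:ℝ)^((r₁:ℤ) + r₂ - m))⌉
      ≤ (minDist (BiD m r₁ r₂) : ℤ) :=
  Int.ceil_le.2 <| (((weightBound_weightSpan m r₁ r₂).mono (BiD_le_weightSpan h1 h2)).le_minDist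
    (exists_mem_BiD_ne_zero h1 h2)).trans_eq (Int.cast_natCast _).symm
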